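/- arXiv:1210.2845 — 3 statements merged into one kernel-verified Lean document; each statement's English description precedes it below -/
import Mathlib

section
/- (Sufficiency of the KKT conditions.) Let ρ_1,…,ρ_N be density matrices on ℂ^d with prior probabilities q_x ≥ 0, Σ_x q_x = 1. Suppose there exist a Hermitian d×d matrix K, positive semidefinite matrices S_1,…,S_N with K = q_x ρ_x + S_x for every x, and an N-outcome POVM (M_x)_{x=1}^N with tr(S_x M_x) = 0 for every x. Then (M_x) is an optimal measurement: for every N-outcome POVM (N_x)_{x=1}^N one has Σ_x q_x tr(N_x ρ_x) ≤ Σ_x q_x tr(M_x ρ_x) = tr(K); hence the guessing probability equals tr(K). -/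
open BigOperators Matrix
open scoped ComplexOrder

/-- A density matrix: positive semidefinite with trace 1. -/
def IsDensityMatrix {d : ℕ} (ρ : Matrix (Fin d) (Fin d) ℂ) : Prop :=
  ρ.PosSemidef ∧ ρ.trace = 1

/-- An N-outcome POVM: positive semidefinite elements summing to the identity. -/
def IsPOVM {d N : ℕ} (M : Fin N → Matrix (Fin d) (Fin d) ℂ) : Prop :=
  (∀ x, (M x).PosSemidef) ∧ ∑ x, M x = 1

/-! Weak duality: `∑ₓ qₓ tr(Nₓ ρₓ) = tr K - ∑ₓ tr(Sₓ Nₓ)` for every POVM `(Nₓ)`, and each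
`tr(Sₓ Nₓ)` is a trace of a product of positive semidefinite matrices, hence nonnegative.
So `tr K` bounds the success probability of every measurement, and complementary slackness
`tr(Sₓ Mₓ) = 0` says that `(Mₓ)` attains it. -/

open scoped MatrixOrder in
theorem Matrix.PosSemidef.trace_mul_nonneg {n 𝕜 : Type*} [Fintype n] [RCLike 𝕜]
    {A B : Matrix n n 𝕜} (hA : A.PosSemidef) (hB : B.PosSemidef) : 0 ≤ (A * B).trace := by
  classical
  obtain ⟨X, rfl⟩ := CStarAlgebra.nonneg_iff_eq_star_mul_self.mp hA.nonneg
  rw [star_eq_conjTranspose, mul_assoc, trace_mul_comm]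
  exact (hB.mul_mul_conjTranspose_same X).trace_nonneg

theorem sum_mul_trace_mul_eq_trace_sub {ι n R : Type*} [Fintype ι] [Fintype n] [DecidableEq n]
    [CommRing R] {q : ι → R} {ρ S N : ι → Matrix n n R} {K : Matrix n n R}
    (hKS : ∀ x, K = q x • ρ x + S x) (hN : ∑ x, N x = 1) :
    ∑ x, q x * (N x * ρ x).trace = K.trace - ∑ x, (S x * N x).trace := by
  have hterm : ∀ x, q x * (N x * ρ x).trace = (N x * K).trace - (S x * N x).trace := by
    intro x
    rw [hKS x, mul_add, trace_add, Matrix.mul_smul, trace_smul, trace_mul_comm (S x), smul_eq_mul]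
    ring
  rw [Finset.sum_congr rfl fun x _ ↦ hterm x, Finset.sum_sub_distrib, ← trace_sum,
    ← Finset.sum_mul, hN, one_mul]

theorem kkt_sufficient_for_optimality_general
    (d N : ℕ) (ρ : Fin N → Matrix (Fin d) (Fin d) ℂ)
    (q : Fin N → ℝ)
    (K : Matrix (Fin d) (Fin d) ℂ)
    (S : Fin N → Matrix (Fin d) (Fin d) ℂ) (hS : ∀ x, (S x).PosSemidef)
    (hKS : ∀ x, K = (q x : ℂ) • ρ x + S x)
    (M : Fin N → Matrix (Fin d) (Fin d) ℂ) (hM : IsPOVM M)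
    (horth : ∀ x, ((S x) * (M x)).trace = 0) :
    (∀ Nx : Fin N → Matrix (Fin d) (Fin d) ℂ, IsPOVM Nx →
      ∑ x, q x * ((Nx x * ρ x).trace).re ≤ ∑ x, q x * ((M x * ρ x).trace).re) ∧
    ∑ x, q x * ((M x * ρ x).trace).re = (K.trace).re := by
  have hvalue : ∀ Nx : Fin N → Matrix (Fin d) (Fin d) ℂ, IsPOVM Nx →
      ∑ x, q x * ((Nx x * ρ x).trace).re = K.trace.re - ∑ x, ((S x * Nx x).trace).re := by
    intro Nx hNx
    simpa only [Complex.re_sum, Complex.sub_re, Complex.re_ofReal_mul] using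
      congrArg Complex.re (sum_mul_trace_mul_eq_trace_sub hKS hNx.2)
  have hM_value : ∑ x, q x * ((M x * ρ x).trace).re = K.trace.re := by
    simp [hvalue M hM, horth]
  refine ⟨fun Nx hNx ↦ ?_, hM_value⟩
  have hslack : 0 ≤ ∑ x, ((S x * Nx x).trace).re :=
    Finset.sum_nonneg fun x _ ↦ (Complex.nonneg_iff.mp ((hS x).trace_mul_nonneg (hNx.1 x))).1
  linarith [hvalue Nx hNx]

/-- sufficiency of the KKT conditions: if `K = q_x ρ_x + S_x` with
`S_x ⪰ 0` and `(M_x)` is a POVM with `tr(S_x M_x) = 0` for every `x`, then `(M_x)` is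
optimal: every POVM `(N_x)` satisfies `Σ_x q_x tr(N_x ρ_x) ≤ Σ_x q_x tr(M_x ρ_x) = tr K`. -/
theorem kkt_sufficient_for_optimality
    (d N : ℕ) (ρ : Fin N → Matrix (Fin d) (Fin d) ℂ)
    (hρ : ∀ x, IsDensityMatrix (ρ x))
    (q : Fin N → ℝ) (hq : ∀ x, 0 ≤ q x) (hq1 : ∑ x, q x = 1)
    (K : Matrix (Fin d) (Fin d) ℂ) (hK : K.IsHermitian)
    (S : Fin N → Matrix (Fin d) (Fin d) ℂ) (hS : ∀ x, (S x).PosSemidef)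
    (hKS : ∀ x, K = (q x : ℂ) • ρ x + S x)
    (M : Fin N → Matrix (Fin d) (Fin d) ℂ) (hM : IsPOVM M)
    (horth : ∀ x, ((S x) * (M x)).trace = 0) :
    (∀ Nx : Fin N → Matrix (Fin d) (Fin d) ℂ, IsPOVM Nx →
      ∑ x, q x * ((Nx x * ρ x).trace).re ≤ ∑ x, q x * ((M x * ρ x).trace).re) ∧
    ∑ x, q x * ((M x * ρ x).trace).re = (K.trace).re :=
  kkt_sufficient_for_optimality_general d N ρ q K S hS hKS M hM horth
end

section
/- Let ρ_1,…,ρ_N be density matrices on ℂ^d with prior probabilities q_x ≥ 0, Σ_x q_x = 1. Suppose K is a Hermitian d×d matrix and S_1,…,S_N are positive semidefinite matrices with K = q_x ρ_x + S_x for every x, and (M_x)_{x=1}^N is an N-outcome POVM achieving tr(K), i.e. Σ_x q_x tr(M_x ρ_x) = tr(K). Then S_x M_x = 0 for every x, and K = Σ_x q_x ρ_x M_x. -/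
open BigOperators Matrix
open scoped ComplexOrder

/-!
Since `∑ₓ Mₓ = 1`, `tr K = ∑ₓ tr(K Mₓ) = ∑ₓ qₓ tr(ρₓ Mₓ) + ∑ₓ tr(Sₓ Mₓ)`, so achieving `tr K`
forces `∑ₓ tr(Sₓ Mₓ) = 0`. Each summand is the trace of a product of two positive semidefinite
matrices, hence nonnegative, and it vanishes only when the product does. Then
`K = ∑ₓ K Mₓ = ∑ₓ qₓ ρₓ Mₓ`.
-/

namespace Matrix

open scoped MatrixOrder

variable {n 𝕜 : Type*} [Fintype n] [RCLike 𝕜]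

lemma trace_conjTranspose_mul_self_mul_conjTranspose_mul_self (X Y : Matrix n n 𝕜) :
    (Xᴴ * X * (Yᴴ * Y)).trace = ((Y * Xᴴ)ᴴ * (Y * Xᴴ)).trace := by
  rw [conjTranspose_mul, conjTranspose_conjTranspose, Matrix.mul_assoc, trace_mul_comm,
    Matrix.mul_assoc, Matrix.mul_assoc, Matrix.mul_assoc]

lemma conjTranspose_mul_self_mul_conjTranspose_mul_self_eq_zero {X Y : Matrix n n 𝕜}
    (h : Y * Xᴴ = 0) : Xᴴ * X * (Yᴴ * Y) = 0 := by
  have hXY : X * Yᴴ = 0 := by simpa using congrArg conjTranspose h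
  rw [Matrix.mul_assoc, ← Matrix.mul_assoc X, hXY, Matrix.zero_mul, Matrix.mul_zero]

variable {A B : Matrix n n 𝕜}

lemma PosSemidef.trace_mul_nonneg_s4 (hA : A.PosSemidef) (hB : B.PosSemidef) :
    0 ≤ (A * B).trace := by
  classical
  obtain ⟨X, rfl⟩ := CStarAlgebra.nonneg_iff_eq_star_mul_self.mp hA.nonneg
  obtain ⟨Y, rfl⟩ := CStarAlgebra.nonneg_iff_eq_star_mul_self.mp hB.nonneg
  simp only [star_eq_conjTranspose]
  rw [trace_conjTranspose_mul_self_mul_conjTranspose_mul_self]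
  exact (posSemidef_conjTranspose_mul_self _).trace_nonneg

lemma PosSemidef.trace_mul_eq_zero_iff (hA : A.PosSemidef) (hB : B.PosSemidef) :
    (A * B).trace = 0 ↔ A * B = 0 := by
  refine ⟨fun h => ?_, fun h => by rw [h, trace_zero]⟩
  classical
  obtain ⟨X, rfl⟩ := CStarAlgebra.nonneg_iff_eq_star_mul_self.mp hA.nonneg
  obtain ⟨Y, rfl⟩ := CStarAlgebra.nonneg_iff_eq_star_mul_self.mp hB.nonneg
  simp only [star_eq_conjTranspose] at h ⊢
  rw [trace_conjTranspose_mul_self_mul_conjTranspose_mul_self,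
    trace_conjTranspose_mul_self_eq_zero_iff] at h
  exact conjTranspose_mul_self_mul_conjTranspose_mul_self_eq_zero h

end Matrix

lemma Complex.eq_zero_of_nonneg_of_re_eq_zero {z : ℂ} (hz : 0 ≤ z) (hre : z.re = 0) : z = 0 :=
  Complex.ext hre (nonneg_iff.mp hz).2.symm

theorem achieving_povm_orthogonality_general
    (d N : ℕ) (ρ : Fin N → Matrix (Fin d) (Fin d) ℂ)
    (q : Fin N → ℝ)
    (K : Matrix (Fin d) (Fin d) ℂ)
    (S : Fin N → Matrix (Fin d) (Fin d) ℂ) (hS : ∀ x, (S x).PosSemidef)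
    (hKS : ∀ x, K = (q x : ℂ) • ρ x + S x)
    (M : Fin N → Matrix (Fin d) (Fin d) ℂ) (hM : IsPOVM M)
    (hach : ∑ x, q x * ((M x * ρ x).trace).re = (K.trace).re) :
    (∀ x, S x * M x = 0) ∧ K = ∑ x, (q x : ℂ) • (ρ x * M x) := by
  obtain ⟨hM_psd, hM_sum⟩ := hM
  have hK_sum : K = ∑ x, K * M x := by rw [← Finset.mul_sum, hM_sum, Matrix.mul_one]
  have hKM : ∀ x, K * M x = (q x : ℂ) • (ρ x * M x) + S x * M x := fun x => by
    rw [hKS x, Matrix.add_mul, Matrix.smul_mul]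
  have hSM_nonneg : ∀ x, 0 ≤ (S x * M x).trace := fun x => (hS x).trace_mul_nonneg_s4 (hM_psd x)
  have hSM_sum_re : (∑ x, (S x * M x).trace).re = 0 := by
    have hK_trace := congrArg (fun A => A.trace.re) hK_sum
    simp only [hKM, trace_sum, trace_add, trace_smul, Complex.re_sum, Complex.add_re,
      smul_eq_mul, Complex.re_ofReal_mul, trace_mul_comm (ρ _), Finset.sum_add_distrib,
      ← hach] at hK_trace
    rw [Complex.re_sum]
    linarith
  have hSM_trace : ∀ x, (S x * M x).trace = 0 := fun x =>
    (Finset.sum_eq_zero_iff_of_nonneg fun x _ => hSM_nonneg x).mp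
      (Complex.eq_zero_of_nonneg_of_re_eq_zero (Finset.sum_nonneg fun x _ => hSM_nonneg x)
        hSM_sum_re) x (Finset.mem_univ x)
  have hSM : ∀ x, S x * M x = 0 := fun x =>
    ((hS x).trace_mul_eq_zero_iff (hM_psd x)).mp (hSM_trace x)
  exact ⟨hSM, hK_sum.trans (Finset.sum_congr rfl fun x _ => by rw [hKM, hSM, add_zero])⟩

/-- if `K = q_x ρ_x + S_x` with `S_x ⪰ 0` and the POVM `(M_x)` achieves
`Σ_x q_x tr(M_x ρ_x) = tr K`, then `S_x M_x = 0` for every `x` and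
`K = Σ_x q_x ρ_x M_x`. -/
theorem achieving_povm_orthogonality
    (d N : ℕ) (ρ : Fin N → Matrix (Fin d) (Fin d) ℂ)
    (hρ : ∀ x, IsDensityMatrix (ρ x))
    (q : Fin N → ℝ) (hq : ∀ x, 0 ≤ q x) (hq1 : ∑ x, q x = 1)
    (K : Matrix (Fin d) (Fin d) ℂ) (hK : K.IsHermitian)
    (S : Fin N → Matrix (Fin d) (Fin d) ℂ) (hS : ∀ x, (S x).PosSemidef)
    (hKS : ∀ x, K = (q x : ℂ) • ρ x + S x)
    (M : Fin N → Matrix (Fin d) (Fin d) ℂ) (hM : IsPOVM M)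
    (hach : ∑ x, q x * ((M x * ρ x).trace).re = (K.trace).re) :
    (∀ x, S x * M x = 0) ∧ K = ∑ x, (q x : ℂ) • (ρ x * M x) :=
  achieving_povm_orthogonality_general d N ρ q K S hS hKS M hM hach
end

section
/- (The KKT conditions imply the Holevo–Yuen optimality conditions.) Let ρ_1,…,ρ_N be density matrices on ℂ^d with prior probabilities q_x ≥ 0, Σ_x q_x = 1. Suppose there exist a Hermitian d×d matrix K and positive semidefinite matrices S_1,…,S_N with K = q_x ρ_x + S_x for every x, and an N-outcome POVM (M_x)_{x=1}^N with tr(S_x M_x) = 0 for every x. Then: (i) M_x (q_x ρ_x − q_y ρ_y) M_y = 0 for all x, y ∈ {1,…,N}; and (ii) Σ_x q_x ρ_x M_x − q_y ρ_y is positive semidefinite for every y. -/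
open BigOperators Matrix
open scoped ComplexOrder

/-!
Complementary slackness `tr(S_x M_x) = 0` between positive semidefinite matrices forces
`S_x M_x = M_x S_x = 0`: writing `A = aᴴa` and `B = bᴴb`, the trace `tr(AB)` is the squared
Hilbert–Schmidt norm of `abᴴ`. Then `q_x ρ_x = K - S_x`, and both conditions become identities
in which every surviving term contains a factor `S_x M_x` or `M_x S_x`, using `Σ_x M_x = 1`.
-/

open scoped MatrixOrder in
theorem Matrix.PosSemidef.mul_eq_zero_of_trace_mul_eq_zero {n 𝕜 : Type*} [Fintype n]
    [RCLike 𝕜] {A B : Matrix n n 𝕜} (hA : A.PosSemidef) (hB : B.PosSemidef)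
    (h : (A * B).trace = 0) : A * B = 0 := by
  classical
  obtain ⟨a, rfl⟩ := CStarAlgebra.nonneg_iff_eq_star_mul_self.mp hA.nonneg
  obtain ⟨b, rfl⟩ := CStarAlgebra.nonneg_iff_eq_star_mul_self.mp hB.nonneg
  simp only [star_eq_conjTranspose] at h ⊢
  have hab : a * bᴴ = 0 := by
    rw [← trace_conjTranspose_mul_self_eq_zero_iff, conjTranspose_mul, conjTranspose_conjTranspose,
      ← h, Matrix.mul_assoc, trace_mul_comm]
    simp only [Matrix.mul_assoc]
  rw [Matrix.mul_assoc, ← Matrix.mul_assoc a, hab, Matrix.zero_mul, Matrix.mul_zero]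

theorem kkt_implies_holevo_yuen_general
    (d N : ℕ) (ρ : Fin N → Matrix (Fin d) (Fin d) ℂ)
    (q : Fin N → ℝ)
    (K : Matrix (Fin d) (Fin d) ℂ)
    (S : Fin N → Matrix (Fin d) (Fin d) ℂ) (hS : ∀ x, (S x).PosSemidef)
    (hKS : ∀ x, K = (q x : ℂ) • ρ x + S x)
    (M : Fin N → Matrix (Fin d) (Fin d) ℂ) (hM : IsPOVM M)
    (horth : ∀ x, ((S x) * (M x)).trace = 0) :
    (∀ x y, M x * ((q x : ℂ) • ρ x - (q y : ℂ) • ρ y) * M y = 0) ∧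
    (∀ y, ((∑ x, (q x : ℂ) • (ρ x * M x)) - (q y : ℂ) • ρ y).PosSemidef) := by
  obtain ⟨hMpsd, hMsum⟩ := hM
  have hSM : ∀ x, S x * M x = 0 := fun x =>
    (hS x).mul_eq_zero_of_trace_mul_eq_zero (hMpsd x) (horth x)
  have hMS : ∀ x, M x * S x = 0 := fun x =>
    (hMpsd x).mul_eq_zero_of_trace_mul_eq_zero (hS x) (by rw [trace_mul_comm]; exact horth x)
  have hqρ : ∀ x, (q x : ℂ) • ρ x = K - S x := fun x => by
    rw [hKS x, add_sub_cancel_right]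
  refine ⟨fun x y => ?_, fun y => ?_⟩
  · rw [hqρ x, hqρ y, sub_sub_sub_cancel_left, Matrix.mul_sub, Matrix.sub_mul, Matrix.mul_assoc,
      hSM y, hMS x, Matrix.mul_zero, Matrix.zero_mul, sub_zero]
  · have hsum : ∑ x, (q x : ℂ) • (ρ x * M x) = K := by
      simp_rw [← Matrix.smul_mul, hqρ, Matrix.sub_mul, hSM, sub_zero, ← Finset.mul_sum, hMsum,
        Matrix.mul_one]
    rw [hsum, hqρ y, sub_sub_cancel]
    exact hS y

/-- KKT ⟹ Holevo–Yuen conditions: if `K = q_x ρ_x + S_x` with `S_x ⪰ 0`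
and `(M_x)` is a POVM with `tr(S_x M_x) = 0` for all `x`, then
(i) `M_x (q_x ρ_x − q_y ρ_y) M_y = 0` for all `x, y`, and
(ii) `Σ_x q_x ρ_x M_x − q_y ρ_y ⪰ 0` for all `y`. -/
theorem kkt_implies_holevo_yuen
    (d N : ℕ) (ρ : Fin N → Matrix (Fin d) (Fin d) ℂ)
    (hρ : ∀ x, IsDensityMatrix (ρ x))
    (q : Fin N → ℝ) (hq : ∀ x, 0 ≤ q x) (hq1 : ∑ x, q x = 1)
    (K : Matrix (Fin d) (Fin d) ℂ) (hK : K.IsHermitian)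
    (S : Fin N → Matrix (Fin d) (Fin d) ℂ) (hS : ∀ x, (S x).PosSemidef)
    (hKS : ∀ x, K = (q x : ℂ) • ρ x + S x)
    (M : Fin N → Matrix (Fin d) (Fin d) ℂ) (hM : IsPOVM M)
    (horth : ∀ x, ((S x) * (M x)).trace = 0) :
    (∀ x y, M x * ((q x : ℂ) • ρ x - (q y : ℂ) • ρ y) * M y = 0) ∧
    (∀ y, ((∑ x, (q x : ℂ) • (ρ x * M x)) - (q y : ℂ) • ρ y).PosSemidef) :=
  kkt_implies_holevo_yuen_general d N ρ q K S hS hKS M hM horth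
end
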